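/- arXiv:1408.5546 — 7 statements merged into one kernel-verified Lean document; each statement's English description precedes it below -/
import Mathlib

section
/- Let A be a C*-algebra, let a, b ∈ A be positive elements, and let α, β ≥ 0. Then (a + b - (α+β))₊ is Cuntz subequivalent (in A) to (a-α)₊ + (b-β)₊. -/
open Filter Topology

/-- Cuntz subequivalence: `a ≾ b` iff there is a sequence `vₙ` with `vₙ b vₙ* → a`. -/
def CuntzSubequiv (A : Type*) [Mul A] [Star A] [TopologicalSpace A] (a b : A) : Prop :=
  ∃ v : ℕ → A, Tendsto (fun n => v n * b * star (v n)) atTop (𝓝 a)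

/-- The cut-down `(a - ε)₊`, i.e. functional calculus of `a` with `λ ↦ max (λ - ε) 0`. -/
noncomputable def cutDown {A : Type*} [NonUnitalCStarAlgebra A] (a : A) (ε : ℝ) : A :=
  cfcₙ (fun t : ℝ => max (t - ε) 0) a

/-!
Write `s = a + b`, `γ = α + β` and `c = (a - α)₊ + (b - β)₊`. In the unitization `s - γ ≤ c`.
For `ε > 0` let `q = φ(s)`, where `φ` ramps linearly from `0` at `γ` to `1` at `γ + ε`; then
`(s - γ - ε)₊ ≤ q (s - γ) q ≤ q c q`. An element dominated by `z` is, up to any `δ > 0`, a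
conjugate of `z`: if `m m* ≤ z` and `u = (z + δ)^(-1/2)`, then `m* m - (m* u) z (m* u)*` equals
`δ (u m)* (u m)`, whose norm is `δ ‖u m m* u‖ ≤ δ ‖u z u‖ ≤ δ`. So `(s - γ - ε)₊` is nearly a
conjugate of `c`, and it is within `ε` of `(s - γ)₊`.
-/

open scoped CStarAlgebra

lemma cuntzSubequiv_of_forall_exists_norm_sub_le {A : Type*} [NonUnitalSeminormedRing A]
    [Star A] {a b : A} (h : ∀ δ > 0, ∃ v : A, ‖v * b * star v - a‖ ≤ δ) :
    CuntzSubequiv A a b := by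
  choose v hv using fun n : ℕ => h (1 / (n + 1)) Nat.one_div_pos_of_nat
  refine ⟨v, tendsto_iff_norm_sub_tendsto_zero.mpr ?_⟩
  exact squeeze_zero (fun _ => norm_nonneg _) hv tendsto_one_div_add_atTop_nhds_zero_nat

lemma Unitization.exists_inr_eq_inr_mul {R A : Type*} [Semiring R] [NonUnitalNonAssocSemiring A]
    [Module R A] (a : A) (x : Unitization R A) : ∃ b : A, (b : Unitization R A) = a * x :=
  ⟨(a * x : Unitization R A).snd, Unitization.ext (by simp) rfl⟩

lemma max_sub_add_le_mul_sub_mul {γ ε t : ℝ} (hε : 0 < ε) :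
    max (t - (γ + ε)) 0 ≤ min (max (t - γ) 0 / ε) 1 * (t - γ) * min (max (t - γ) 0 / ε) 1 := by
  have hφ : 0 ≤ min (max (t - γ) 0 / ε) 1 := by positivity
  rcases le_total (t - γ) 0 with hneg | hpos
  · simp [max_eq_right hneg, show t - (γ + ε) ≤ 0 by linarith]
  rcases le_total (t - γ) ε with hle | hge
  · rw [max_eq_right (by linarith)]
    exact mul_nonneg (mul_nonneg hφ hpos) hφ
  · rw [min_eq_right (by rw [le_div_iff₀ hε, max_eq_left hpos]; linarith), one_mul, mul_one]
    exact max_le (by linarith) hpos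

section Unital

variable {B : Type*} [CStarAlgebra B] [PartialOrder B] [StarOrderedRing B]

lemma exists_isSelfAdjoint_conj_add_algebraMap_eq_one {z : B} (hz : 0 ≤ z) {δ : ℝ}
    (hδ : 0 < δ) : ∃ u : B, IsSelfAdjoint u ∧ u * (z + algebraMap ℝ B δ) * u = 1 := by
  -- `u = (z + δ)^(-1/2)`; the `|t|` only makes the function continuous on all of `ℝ`.
  obtain ⟨f, hf, hf_inv⟩ : ∃ f : ℝ → ℝ, Continuous f ∧ ∀ t, 0 ≤ t → f t * (t + δ) * f t = 1 := by
    refine ⟨fun t => (√(|t| + δ))⁻¹, .inv₀ (by fun_prop) fun t => by positivity, fun t ht => ?_⟩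
    have : √(t + δ) ≠ 0 := by positivity
    simp only [abs_of_nonneg ht]
    field_simp
    rw [Real.sq_sqrt (by positivity)]
  refine ⟨cfc f z, cfc_predicate _ _, ?_⟩
  have : cfc (fun t => f t * (t + δ) * f t) z = 1 := by
    rw [← cfc_const_one ℝ z]
    exact cfc_congr fun t ht => hf_inv t (spectrum_nonneg_of_nonneg hz ht)
  rwa [cfc_mul (fun t => f t * (t + δ)) f z, cfc_mul f (fun t => t + δ) z,
    cfc_add (a := z) (fun t => t) (fun _ => δ), cfc_id' ℝ z, cfc_const δ z] at this

lemma exists_norm_conj_sub_star_mul_self_le {m z : B} (hmz : m * star m ≤ z) {δ : ℝ}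
    (hδ : 0 < δ) : ∃ u : B, ‖star m * u * z * star (star m * u) - star m * m‖ ≤ δ := by
  have hz : 0 ≤ z := (mul_star_self_nonneg m).trans hmz
  obtain ⟨u, hu, hu_inv⟩ := exists_isSelfAdjoint_conj_add_algebraMap_eq_one hz hδ
  rw [mul_add, add_mul, Algebra.algebraMap_eq_smul_one, mul_smul_comm, mul_one,
    smul_mul_assoc] at hu_inv
  have huzu_nonneg : 0 ≤ u * z * u := hu.conjugate_nonneg hz
  have huzu_le_one : ‖u * z * u‖ ≤ 1 := by
    rw [CStarAlgebra.norm_le_one_iff_of_nonneg _ huzu_nonneg, ← hu_inv]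
    exact le_add_of_nonneg_right (smul_nonneg hδ.le (hu.mul_self_nonneg))
  refine ⟨u, ?_⟩
  have hdiff : star m * m - star m * u * z * star (star m * u) = δ • (star (u * m) * (u * m)) := by
    have : star m * m = star m * (u * z * u + δ • (u * u)) * m := by rw [hu_inv, mul_one]
    rw [star_mul, star_mul, star_star, hu.star_eq, this]
    simp only [mul_add, add_mul, mul_smul_comm, smul_mul_assoc, mul_assoc]
    abel
  calc ‖star m * u * z * star (star m * u) - star m * m‖
      = δ * ‖u * (m * star m) * u‖ := by
        rw [norm_sub_rev, hdiff, norm_smul, Real.norm_of_nonneg hδ.le,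
          CStarRing.norm_star_mul_self, ← CStarRing.norm_self_mul_star, star_mul, hu.star_eq]
        simp only [mul_assoc]
    _ ≤ δ * ‖u * z * u‖ := by
        gcongr
        exact CStarAlgebra.norm_le_norm_of_nonneg_of_le
          (hu.conjugate_nonneg (mul_star_self_nonneg m)) (hu.conjugate_le_conjugate hmz)
    _ ≤ δ := mul_le_of_le_one_right hδ.le huzu_le_one

lemma cfc_max_sub_add_le_conj {s c : B} (hs : IsSelfAdjoint s) {γ ε : ℝ}
    (hsc : s - algebraMap ℝ B γ ≤ c) (hε : 0 < ε) :
    cfc (fun t : ℝ => max (t - (γ + ε)) 0) s ≤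
      cfc (fun t : ℝ => min (max (t - γ) 0 / ε) 1) s * c *
        cfc (fun t : ℝ => min (max (t - γ) 0 / ε) 1) s := by
  set φ : ℝ → ℝ := fun t => min (max (t - γ) 0 / ε) 1
  have hφ : Continuous φ := by fun_prop
  calc cfc (fun t : ℝ => max (t - (γ + ε)) 0) s
      ≤ cfc (fun t => φ t * (t - γ) * φ t) s :=
        cfc_mono fun t _ => max_sub_add_le_mul_sub_mul hε
    _ = cfc φ s * (s - algebraMap ℝ B γ) * cfc φ s := by
        rw [cfc_mul (fun t => φ t * (t - γ)) φ s, cfc_mul φ (fun t => t - γ) s,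
          cfc_sub (a := s) (fun t => t) (fun _ => γ), cfc_id' ℝ s, cfc_const γ s]
    _ ≤ cfc φ s * c * cfc φ s := (cfc_predicate φ s).conjugate_le_conjugate hsc

end Unital

section NonUnital

variable {A : Type*} [NonUnitalCStarAlgebra A]

lemma inr_cutDown (u : A) {ρ : ℝ} (hρ : 0 ≤ ρ) :
    ((cutDown u ρ : A) : A⁺¹) = cfc (fun t : ℝ => max (t - ρ) 0) (u : A⁺¹) :=
  Unitization.real_cfcₙ_eq_cfc_inr u (fun t : ℝ => max (t - ρ) 0) (by simpa using hρ)

lemma norm_cutDown_add_sub_cutDown_le (u : A) {ρ ε : ℝ} (hρ : 0 ≤ ρ) (hε : 0 ≤ ε) :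
    ‖cutDown u (ρ + ε) - cutDown u ρ‖ ≤ ε := by
  rw [cutDown, cutDown,
    ← cfcₙ_sub (fun t : ℝ => max (t - (ρ + ε)) 0) (fun t : ℝ => max (t - ρ) 0) u
    (hf0 := max_eq_right (by linarith)) (hg0 := max_eq_right (by linarith))]
  refine norm_cfcₙ_le fun t _ => ?_
  calc ‖max (t - (ρ + ε)) 0 - max (t - ρ) 0‖ ≤ |(t - (ρ + ε)) - (t - ρ)| :=
        abs_max_sub_max_le_abs _ _ _
    _ = ε := by rw [show t - (ρ + ε) - (t - ρ) = -ε by ring, abs_neg, abs_of_nonneg hε]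

lemma inr_sub_algebraMap_le_inr_cutDown {u : A} (hu : IsSelfAdjoint u) {ρ : ℝ} (hρ : 0 ≤ ρ) :
    (u : A⁺¹) - algebraMap ℝ A⁺¹ ρ ≤ ((cutDown u ρ : A) : A⁺¹) := by
  have hu' : IsSelfAdjoint (u : A⁺¹) := hu.inr ℂ
  calc (u : A⁺¹) - algebraMap ℝ A⁺¹ ρ = cfc (fun t : ℝ => t - ρ) (u : A⁺¹) := by
        rw [cfc_sub (a := (u : A⁺¹)) (fun t => t) (fun _ => ρ), cfc_id' ℝ _, cfc_const ρ _]
    _ ≤ cfc (fun t : ℝ => max (t - ρ) 0) (u : A⁺¹) := cfc_mono fun t _ => le_max_left _ _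
    _ = ((cutDown u ρ : A) : A⁺¹) := (inr_cutDown u hρ).symm

variable [PartialOrder A] [StarOrderedRing A]

lemma cutDown_nonneg (u : A) (ρ : ℝ) : 0 ≤ cutDown u ρ :=
  cfcₙ_nonneg fun _ _ => le_max_right _ _

lemma exists_cutDown_add_le_conj {u c : A} (hu : IsSelfAdjoint u) (hc : IsSelfAdjoint c) {γ ε : ℝ}
    (huc : (u : A⁺¹) - algebraMap ℝ A⁺¹ γ ≤ (c : A⁺¹)) (hγ : 0 ≤ γ) (hε : 0 < ε) :
    ∃ q : A, cutDown u (γ + ε) ≤ q * c * star q := by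
  set φ : ℝ → ℝ := fun t => min (max (t - γ) 0 / ε) 1
  have hφ0 : φ 0 = 0 := by simp [φ, hγ]
  have hq : IsSelfAdjoint (cfcₙ φ u) := cfcₙ_predicate _ _
  refine ⟨cfcₙ φ u, ?_⟩
  rw [← Unitization.inr_le_iff _ _ (cutDown_nonneg u _).isSelfAdjoint (hc.conjugate _),
    hq.star_eq, Unitization.inr_mul, Unitization.inr_mul, inr_cutDown u (by positivity),
    Unitization.real_cfcₙ_eq_cfc_inr u φ]
  exact cfc_max_sub_add_le_conj (hu.inr ℂ) huc hε

lemma exists_norm_conj_sub_le_of_le {x z : A} (hx : 0 ≤ x) (hxz : x ≤ z) {δ : ℝ} (hδ : 0 < δ) :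
    ∃ w : A, ‖w * z * star w - x‖ ≤ δ := by
  set m := CFC.sqrt x
  have hm : IsSelfAdjoint m := .of_nonneg (CFC.sqrt_nonneg x)
  have hmm : m * m = x := CFC.sqrt_mul_sqrt_self x
  have hmz : (m : A⁺¹) * star (m : A⁺¹) ≤ (z : A⁺¹) := by
    rw [← Unitization.inr_star, ← Unitization.inr_mul, hm.star_eq, hmm,
      Unitization.inr_le_iff _ _ (.of_nonneg hx) (.of_nonneg (hx.trans hxz))]
    exact hxz
  obtain ⟨u, hu⟩ := exists_norm_conj_sub_star_mul_self_le hmz hδ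
  rw [← Unitization.inr_star, hm.star_eq] at hu
  obtain ⟨w, hw⟩ := Unitization.exists_inr_eq_inr_mul m u
  refine ⟨w, ?_⟩
  rwa [← Unitization.norm_inr (𝕜 := ℂ), Unitization.inr_sub, Unitization.inr_mul,
    Unitization.inr_mul, Unitization.inr_star, hw, ← hmm, Unitization.inr_mul]

end NonUnital

/-- Lemma 1.5: `(a + b - (α+β))₊ ≾_A (a-α)₊ + (b-β)₊`. -/
theorem cutDown_add_subequiv {A : Type*} [NonUnitalCStarAlgebra A]
    [PartialOrder A] [StarOrderedRing A]
    (a b : A) (ha : 0 ≤ a) (hb : 0 ≤ b) (α β : ℝ) (hα : 0 ≤ α) (hβ : 0 ≤ β) :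
    CuntzSubequiv A (cutDown (a + b) (α + β)) (cutDown a α + cutDown b β) := by
  refine cuntzSubequiv_of_forall_exists_norm_sub_le fun δ hδ => ?_
  set c := cutDown a α + cutDown b β
  have hc : 0 ≤ c := add_nonneg (cutDown_nonneg a α) (cutDown_nonneg b β)
  have hsc : ((a + b : A) : A⁺¹) - algebraMap ℝ A⁺¹ (α + β) ≤ (c : A⁺¹) := by
    rw [Unitization.inr_add, Unitization.inr_add, map_add, add_sub_add_comm]
    exact add_le_add (inr_sub_algebraMap_le_inr_cutDown ha.isSelfAdjoint hα)
      (inr_sub_algebraMap_le_inr_cutDown hb.isSelfAdjoint hβ)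
  obtain ⟨q, hq⟩ := exists_cutDown_add_le_conj (ha.isSelfAdjoint.add hb.isSelfAdjoint)
    hc.isSelfAdjoint hsc (add_nonneg hα hβ) (half_pos hδ)
  obtain ⟨w, hw⟩ := exists_norm_conj_sub_le_of_le (cutDown_nonneg _ _) hq (half_pos hδ)
  refine ⟨w * q, ?_⟩
  calc ‖w * q * c * star (w * q) - cutDown (a + b) (α + β)‖
      = ‖(w * (q * c * star q) * star w - cutDown (a + b) (α + β + δ / 2))
          + (cutDown (a + b) (α + β + δ / 2) - cutDown (a + b) (α + β))‖ := by
        rw [star_mul, sub_add_sub_cancel]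
        simp only [mul_assoc]
    _ ≤ δ / 2 + δ / 2 := norm_add_le_of_le hw
        (norm_cutDown_add_sub_cutDown_le _ (add_nonneg hα hβ) (half_pos hδ).le)
    _ = δ := add_halves δ
end

section
/- Let A be a C*-algebra and let a, b ∈ A satisfy 0 ≤ a ≤ b. Then for every ε > 0, (a - ε)₊ is Cuntz subequivalent to (b - ε)₊ in A. -/
/-!
Put `p = (a - ε)₊` and `q = (b - ε)₊`. Functional calculus gives `p a p = p³ + ε p²`, and since
`b ≤ q + ε` we get `p b p ≤ p q p + ε p²`; so `p³ ≤ p q p`, and `p ≾ p³ ≾ p q p ≾ q`.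

The two nontrivial links, `x ≾ x³` and `x ≾ y` for `0 ≤ x ≤ y`, come from conjugating by functions
of `x` (resp. `√x` times a function of `y`) built from `φ_η(t) = (t² / (t² + η²))²`: it vanishes
at `0`, takes values in `[0, 1]`, and `t (1 - φ_η(t)) ≤ η` for `t ≥ 0`, so `φ_η(y)` acts as an
approximate unit on `y`.  For `x ≤ y` the defect is controlled by the C⋆-identity:
`‖φ_η(y) √x - √x‖² = ‖(1 - φ_η(y)) x (1 - φ_η(y))‖ ≤ ‖(1 - φ_η(y)) y (1 - φ_η(y))‖ ≤ η`.
-/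

open Filter Topology

theorem cuntzSubequiv_mul_mul_star {A : Type*} [Mul A] [Star A] [TopologicalSpace A] (v y : A) :
    CuntzSubequiv A (v * y * star v) y :=
  ⟨fun _ => v, tendsto_const_nhds⟩

theorem cuntzSubequiv_iff_mem_closure {A : Type*} [Mul A] [Star A] [TopologicalSpace A]
    [FrechetUrysohnSpace A] {x y : A} :
    CuntzSubequiv A x y ↔ x ∈ closure (Set.range fun v => v * y * star v) := by
  rw [mem_closure_iff_seq_limit]
  constructor
  · rintro ⟨v, hv⟩
    exact ⟨_, fun n => ⟨v n, rfl⟩, hv⟩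
  · rintro ⟨u, hu, hlim⟩
    choose v hv using hu
    exact ⟨v, by simpa only [hv] using hlim⟩

theorem CuntzSubequiv.of_tendsto {A : Type*} [Mul A] [Star A] [TopologicalSpace A]
    [FrechetUrysohnSpace A] {x y : A} {ι : Type*} {l : Filter ι} [l.NeBot] {v : ι → A}
    (h : Tendsto (fun i => v i * y * star (v i)) l (𝓝 x)) : CuntzSubequiv A x y :=
  cuntzSubequiv_iff_mem_closure.2 <| mem_closure_of_tendsto h <| .of_forall fun i => ⟨v i, rfl⟩

theorem CuntzSubequiv.trans {A : Type*} [Semigroup A] [StarMul A] [TopologicalSpace A]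
    [ContinuousMul A] [FrechetUrysohnSpace A] {x y z : A}
    (hxy : CuntzSubequiv A x y) (hyz : CuntzSubequiv A y z) : CuntzSubequiv A x z := by
  rw [cuntzSubequiv_iff_mem_closure] at *
  refine closure_minimal ?_ isClosed_closure hxy
  rintro _ ⟨v, rfl⟩
  have hconj : Continuous fun c => v * c * star v := by fun_prop
  refine closure_mono ?_ (image_closure_subset_closure_image hconj ⟨y, hyz, rfl⟩)
  rintro _ ⟨_, ⟨w, rfl⟩, rfl⟩
  exact ⟨v * w, by simp only [star_mul, mul_assoc]⟩

noncomputable def approxUnitFun (η t : ℝ) : ℝ := (t ^ 2 / (t ^ 2 + η ^ 2)) ^ 2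

@[simp]
lemma approxUnitFun_zero (η : ℝ) : approxUnitFun η 0 = 0 := by simp [approxUnitFun]

lemma approxUnitFun_nonneg (η t : ℝ) : 0 ≤ approxUnitFun η t := by
  unfold approxUnitFun; positivity

lemma approxUnitFun_le_one (η t : ℝ) : approxUnitFun η t ≤ 1 :=
  pow_le_one₀ (by positivity) (div_le_one_of_le₀ (by nlinarith) (by positivity))

lemma continuous_approxUnitFun {η : ℝ} (hη : η ≠ 0) : Continuous (approxUnitFun η) := by
  unfold approxUnitFun
  exact ((continuous_pow 2).div (by fun_prop) fun t => by positivity).pow 2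

lemma mul_one_sub_approxUnitFun_le {η t : ℝ} (hη : 0 ≤ η) (ht : 0 ≤ t) :
    t * (1 - approxUnitFun η t) ≤ η := by
  rcases ht.eq_or_lt with rfl | ht
  · simpa using hη
  have hu : 0 < t ^ 2 + η ^ 2 := by positivity
  set g := t ^ 2 / (t ^ 2 + η ^ 2) with hg
  have hg1 : g ≤ 1 := div_le_one_of_le₀ (by nlinarith) hu.le
  have h1g : 1 - g = η ^ 2 / (t ^ 2 + η ^ 2) := by rw [hg]; field_simp; ring
  calc t * (1 - approxUnitFun η t) = t * (1 - g) * (1 + g) := by rw [approxUnitFun]; ring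
    _ ≤ t * (1 - g) * 2 := by gcongr; linarith
    _ = 2 * t * η ^ 2 / (t ^ 2 + η ^ 2) := by rw [h1g]; ring
    _ ≤ η := by rw [div_le_iff₀ hu]; nlinarith [mul_nonneg hη (sq_nonneg (t - η))]

/-- `k * x * k - k * x - x * k + x` is `(1 - k) * x * (1 - k)`, written without a unit. -/
lemma conj_one_sub_le_conj_one_sub {R : Type*} [NonUnitalRing R] [PartialOrder R] [StarRing R]
    [StarOrderedRing R] {k x y : R} (hk : IsSelfAdjoint k) (hxy : x ≤ y) :
    k * x * k - k * x - x * k + x ≤ k * y * k - k * y - y * k + y := by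
  obtain ⟨p, hp, rfl⟩ := (StarOrderedRing.le_iff x y).1 hxy
  suffices 0 ≤ k * p * k - k * p - p * k + p by
    convert add_le_add_left this (k * x * k - k * x - x * k + x) using 1 <;> noncomm_ring
  clear hxy
  induction hp using AddSubmonoid.closure_induction with
  | mem _ h =>
    obtain ⟨d, rfl⟩ := h
    convert star_mul_self_nonneg (d * k - d) using 1
    simp only [star_sub, star_mul, hk.star_eq]
    noncomm_ring
  | zero => simp
  | add p q _ _ hp hq =>
    convert add_nonneg hp hq using 1
    noncomm_ring

section CStarAlgebra

variable {A : Type*} [NonUnitalCStarAlgebra A]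

lemma cutDown_mul_self_mul_cutDown {a : A} (ha : IsSelfAdjoint a) {ε : ℝ} (hε : 0 ≤ ε) :
    cutDown a ε * a * cutDown a ε =
      cutDown a ε * cutDown a ε * cutDown a ε + ε • (cutDown a ε * cutDown a ε) := by
  have hf0 : max (0 - ε) 0 = 0 := by simpa using hε
  conv_lhs => enter [1, 2]; rw [← cfcₙ_id' ℝ a]
  simp only [cutDown]
  rw [← cfcₙ_mul _ _ a, ← cfcₙ_mul _ _ a, ← cfcₙ_mul _ _ a, ← cfcₙ_mul _ _ a,
    ← cfcₙ_smul ε _ a, ← cfcₙ_add _ _ a]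
  refine cfcₙ_congr fun t _ => ?_
  rcases le_total t ε with h | h
  · simp [max_eq_right (sub_nonpos.2 h)]
  · simp only [max_eq_left (sub_nonneg.2 h), smul_eq_mul]
    ring

variable [PartialOrder A] [StarOrderedRing A]

lemma cutDown_nonneg_s2 (a : A) (ε : ℝ) : 0 ≤ cutDown a ε :=
  cfcₙ_nonneg fun _ _ => le_max_right _ _

lemma star_left_conjugate_le_cutDown_add {b : A} (hb : 0 ≤ b) {ε : ℝ} (hε : 0 ≤ ε) (c : A) :
    star c * b * c ≤ star c * cutDown b ε * c + ε • (star c * c) := by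
  set m := cfcₙ (fun t : ℝ => min t ε) b
  have hbm : b = cutDown b ε + m := by
    conv_lhs => rw [← cfcₙ_id' ℝ b]
    rw [cutDown, ← cfcₙ_add _ _ b]
    refine cfcₙ_congr fun t _ => ?_
    rcases le_total t ε with h | h
    · simp [max_eq_right (sub_nonpos.2 h), min_eq_left h]
    · simp [max_eq_left (sub_nonneg.2 h), min_eq_right h]
  have hm : ‖m‖ ≤ ε := norm_cfcₙ_le fun t ht => by
    have ht0 := quasispectrum_nonneg_of_nonneg b hb t ht
    rw [Real.norm_eq_abs, abs_of_nonneg (le_min ht0 hε)]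
    exact min_le_right t ε
  calc star c * b * c = star c * cutDown b ε * c + star c * m * c := by
        conv_lhs => rw [hbm]
        noncomm_ring
    _ ≤ star c * cutDown b ε * c + ‖m‖ • (star c * c) := by
        gcongr; exact CStarAlgebra.star_left_conjugate_le_norm_smul (cfcₙ_predicate _ b)
    _ ≤ star c * cutDown b ε * c + ε • (star c * c) := by
        gcongr; exact star_mul_self_nonneg c

theorem CuntzSubequiv.self_mul_self_mul_self {x : A} (hx : 0 ≤ x) :
    CuntzSubequiv A x (x * x * x) := by
  let v (η : ℝ) := cfcₙ (fun t : ℝ => t / (t ^ 2 + η ^ 2)) x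
  refine CuntzSubequiv.of_tendsto (l := 𝓝[>] 0) (v := v) ?_
  rw [tendsto_iff_norm_sub_tendsto_zero]
  refine squeeze_zero_norm' ?_ (tendsto_id.mono_left nhdsWithin_le_nhds)
  filter_upwards [self_mem_nhdsWithin] with η (hη : 0 < η)
  have hv : IsSelfAdjoint (v η) := cfcₙ_predicate _ x
  have hcont : ContinuousOn (fun t : ℝ => t / (t ^ 2 + η ^ 2)) (quasispectrum ℝ x) :=
    Continuous.continuousOn <| by fun_prop (disch := intro; positivity)
  have hφ := continuous_approxUnitFun hη.ne'
  have hcube : x * x * x = cfcₙ (fun t : ℝ => t * t * t) x := by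
    rw [cfcₙ_mul _ _ x, cfcₙ_mul _ _ x, cfcₙ_id' ℝ x]
  have hconj : v η * (x * x * x) * star (v η) - x =
      cfcₙ (fun t => t * approxUnitFun η t - t) x := by
    rw [hv.star_eq, hcube, ← cfcₙ_mul _ _ x, ← cfcₙ_mul _ _ x, cfcₙ_sub _ _ x, cfcₙ_id' ℝ x]
    congr 1
    refine cfcₙ_congr fun t _ => ?_
    simp only [approxUnitFun]
    field_simp
  rw [norm_norm, hconj]
  refine norm_cfcₙ_le fun t ht => ?_
  have ht0 := quasispectrum_nonneg_of_nonneg x hx t ht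
  rw [Real.norm_eq_abs, abs_sub_comm, abs_of_nonneg (by nlinarith [approxUnitFun_le_one η t])]
  show _ ≤ η
  linarith [mul_one_sub_approxUnitFun_le hη.le ht0]

lemma norm_mul_sub_self_sq_le {k s y : A} (hk : IsSelfAdjoint k) (hs : IsSelfAdjoint s)
    (h : s * s ≤ y) : ‖k * s - s‖ ^ 2 ≤ ‖k * y * k - k * y - y * k + y‖ := by
  rw [sq, ← CStarRing.norm_self_mul_star]
  refine CStarAlgebra.norm_le_norm_of_nonneg_of_le (mul_star_self_nonneg _) ?_
  convert conj_one_sub_le_conj_one_sub hk h using 1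
  simp only [star_sub, star_mul, hk.star_eq, hs.star_eq]
  noncomm_ring

lemma norm_conj_one_sub_cfcₙ_approxUnitFun_le {y : A} (hy : 0 ≤ y) {η : ℝ} (hη : 0 < η) :
    ‖cfcₙ (approxUnitFun η) y * y * cfcₙ (approxUnitFun η) y - cfcₙ (approxUnitFun η) y * y
      - y * cfcₙ (approxUnitFun η) y + y‖ ≤ η := by
  have hφ := continuous_approxUnitFun hη.ne'
  have hE : cfcₙ (fun t => (1 - approxUnitFun η t) ^ 2 * t) y =
      cfcₙ (approxUnitFun η) y * y * cfcₙ (approxUnitFun η) y - cfcₙ (approxUnitFun η) y * y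
        - y * cfcₙ (approxUnitFun η) y + y := by
    rw [cfcₙ_congr (g := fun t => approxUnitFun η t * t * approxUnitFun η t
        - approxUnitFun η t * t - t * approxUnitFun η t + t) fun t _ => by ring,
      cfcₙ_add _ _ y, cfcₙ_sub _ _ y, cfcₙ_sub _ _ y, cfcₙ_mul _ _ y, cfcₙ_mul _ _ y,
      cfcₙ_mul _ _ y, cfcₙ_id' ℝ y]
  rw [← hE]
  refine norm_cfcₙ_le fun t ht => ?_
  have ht0 := quasispectrum_nonneg_of_nonneg y hy t ht
  have h0 := approxUnitFun_nonneg η t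
  have h1 := approxUnitFun_le_one η t
  rw [Real.norm_eq_abs, abs_of_nonneg (by positivity)]
  calc (1 - approxUnitFun η t) ^ 2 * t ≤ t * (1 - approxUnitFun η t) := by
        nlinarith [mul_nonneg (mul_nonneg (sub_nonneg.2 h1) ht0) h0]
    _ ≤ η := mul_one_sub_approxUnitFun_le hη.le ht0

theorem CuntzSubequiv.of_le {x y : A} (hx : 0 ≤ x) (hxy : x ≤ y) : CuntzSubequiv A x y := by
  have hy := hx.trans hxy
  set s := CFC.sqrt x
  have hs : IsSelfAdjoint s := (CFC.sqrt_nonneg x).isSelfAdjoint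
  have hss : s * s = x := CFC.sqrt_mul_sqrt_self x hx
  let v (η : ℝ) := s * cfcₙ (fun t : ℝ => √t * t / (t ^ 2 + η ^ 2)) y
  refine CuntzSubequiv.of_tendsto (l := 𝓝[>] 0) (v := v) ?_
  rw [tendsto_iff_norm_sub_tendsto_zero]
  refine squeeze_zero_norm' (a := fun η => ‖s‖ * √η) ?_
    (((continuous_const.mul Real.continuous_sqrt).tendsto' 0 0 (by simp)).mono_left
      nhdsWithin_le_nhds)
  filter_upwards [self_mem_nhdsWithin] with η (hη : 0 < η)
  set k := cfcₙ (approxUnitFun η) y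
  have hk : IsSelfAdjoint k := cfcₙ_predicate _ y
  have hvk : v η * y * star (v η) = s * k * s := by
    have hfc : ContinuousOn (fun t : ℝ => √t * t / (t ^ 2 + η ^ 2)) (quasispectrum ℝ y) :=
      Continuous.continuousOn <| by fun_prop (disch := intro; positivity)
    have hf : IsSelfAdjoint (cfcₙ (fun t : ℝ => √t * t / (t ^ 2 + η ^ 2)) y) :=
      cfcₙ_predicate _ y
    have hfyf : cfcₙ (fun t : ℝ => √t * t / (t ^ 2 + η ^ 2)) y * y *
        cfcₙ (fun t : ℝ => √t * t / (t ^ 2 + η ^ 2)) y = k := by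
      conv_lhs => enter [1, 2]; rw [← cfcₙ_id' ℝ y]
      rw [← cfcₙ_mul _ _ y, ← cfcₙ_mul _ _ y]
      refine cfcₙ_congr fun t ht => ?_
      have ht0 := quasispectrum_nonneg_of_nonneg y hy t ht
      simp only [approxUnitFun]
      field_simp
      rw [Real.sq_sqrt ht0]
      ring
    simp only [v, star_mul, hf.star_eq, hs.star_eq, ← hfyf, mul_assoc]
  have hks : ‖k * s - s‖ ≤ √η := Real.le_sqrt_of_sq_le <|
    (norm_mul_sub_self_sq_le hk hs (hss ▸ hxy)).trans
      (norm_conj_one_sub_cfcₙ_approxUnitFun_le hy hη)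
  calc ‖‖v η * y * star (v η) - x‖‖ = ‖s * (k * s - s)‖ := by
        rw [norm_norm, hvk, mul_sub, ← mul_assoc, hss]
    _ ≤ ‖s‖ * ‖k * s - s‖ := norm_mul_le _ _
    _ ≤ ‖s‖ * √η := by gcongr

end CStarAlgebra

/-- Lemma 1.7: if `0 ≤ a ≤ b` then `(a - ε)₊ ≾_A (b - ε)₊` for every `ε > 0`. -/
theorem cutDown_subequiv_of_le {A : Type*} [NonUnitalCStarAlgebra A]
    [PartialOrder A] [StarOrderedRing A]
    (a b : A) (ha : 0 ≤ a) (hab : a ≤ b) (ε : ℝ) (hε : 0 < ε) :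
    CuntzSubequiv A (cutDown a ε) (cutDown b ε) := by
  set p := cutDown a ε
  have hp : 0 ≤ p := cutDown_nonneg_s2 a ε
  have hp_star : star p = p := hp.isSelfAdjoint.star_eq
  have hcube : p * p * p ≤ p * cutDown b ε * p := by
    have h := (star_left_conjugate_le_conjugate hab p).trans
      (star_left_conjugate_le_cutDown_add (ha.trans hab) hε.le p)
    rw [hp_star, cutDown_mul_self_mul_cutDown ha.isSelfAdjoint hε.le] at h
    exact le_of_add_le_add_right h
  have hcube_nonneg : 0 ≤ p * p * p := by
    simpa only [hp_star] using star_left_conjugate_nonneg hp p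
  have hconj := cuntzSubequiv_mul_mul_star p (cutDown b ε)
  rw [hp_star] at hconj
  exact (CuntzSubequiv.self_mul_self_mul_self hp).trans <|
    (CuntzSubequiv.of_le hcube_nonneg hcube).trans hconj
end

section
/- Let A be a C*-algebra, let n be a positive integer, and let a₁, …, aₙ ∈ A. Set a = a₁ + ⋯ + aₙ and x = a₁*a₁ + ⋯ + aₙ*aₙ. Then a*a belongs to the hereditary subalgebra generated by x, i.e., a*a ∈ closure(x A x). -/
/-!
Pass to the unitization, where `aₖ* aₖ ≤ x` for every `k`. If `w* w ≤ X` with `X ≥ 0`, then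
`w Yᵣ → w` as `r → ∞` for `Yᵣ = rX(1 + rX)⁻¹`: with `Eᵣ = (1 + rX)⁻¹ = 1 - Yᵣ`, the C⋆-identity
gives `‖w Eᵣ‖² = ‖Eᵣ w* w Eᵣ‖ ≤ ‖Eᵣ X Eᵣ‖ ≤ 1/r`. Summing over `k`, `a Yᵣ → a`, hence
`Yᵣ a* a Yᵣ → a* a`. Finally `Yᵣ = X Qᵣ = Qᵣ X` with `Qᵣ = r(1 + rX)⁻¹`, so
`Yᵣ a* a Yᵣ = x (Qᵣ a* a Qᵣ) x`, and `Qᵣ a* a Qᵣ` lies in `A` because `A` is an ideal of its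
unitization.
-/
open NNReal Filter Topology
open scoped CStarAlgebra
open Unitization

lemma nnnorm_mul_sq_le_of_star_mul_self_le {B : Type*} [NonUnitalCStarAlgebra B] [PartialOrder B]
    [StarOrderedRing B] {w X : B} (h : star w * w ≤ X) (e : B) :
    ‖w * e‖₊ ^ 2 ≤ ‖star e * X * e‖₊ := by
  rw [sq, ← CStarRing.nnnorm_star_mul_self, star_mul, mul_assoc, ← mul_assoc (star w),
    ← mul_assoc]
  exact CStarAlgebra.nnnorm_le_nnnorm_of_nonneg_of_le
    (star_left_conjugate_nonneg (star_mul_self_nonneg w) e) (star_left_conjugate_le_conjugate h e)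

lemma NNReal.continuous_one_add_mul_inv (r : ℝ≥0) : Continuous fun t : ℝ≥0 ↦ (1 + r * t)⁻¹ :=
  (continuous_const.add (continuous_const.mul continuous_id)).inv₀ fun t ↦
    (by positivity : (0 : ℝ≥0) < 1 + r * t).ne'

section

variable {B : Type*} [CStarAlgebra B] [PartialOrder B] [StarOrderedRing B] {X : B}

lemma cfc_one_add_mul_inv_add_cfc (hX : 0 ≤ X) (r : ℝ≥0) :
    cfc (fun t : ℝ≥0 ↦ (1 + r * t)⁻¹) X + cfc (fun t : ℝ≥0 ↦ r * t * (1 + r * t)⁻¹) X = 1 := by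
  have hcont := (NNReal.continuous_one_add_mul_inv r).continuousOn (s := spectrum ℝ≥0 X)
  rw [← cfc_add _ _ _ hcont (by fun_prop), ← cfc_one ℝ≥0 X]
  refine cfc_congr fun t _ ↦ ?_
  have : 1 + r * t ≠ 0 := by positivity
  field_simp
  simp

lemma nnnorm_star_cfc_one_add_mul_inv_mul_mul_le (hX : 0 ≤ X) {r : ℝ≥0} (hr : 0 < r) :
    ‖star (cfc (fun t : ℝ≥0 ↦ (1 + r * t)⁻¹) X) * X * cfc (fun t : ℝ≥0 ↦ (1 + r * t)⁻¹) X‖₊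
      ≤ r⁻¹ := by
  have hcont := (NNReal.continuous_one_add_mul_inv r).continuousOn (s := spectrum ℝ≥0 X)
  rw [← cfc_star]
  simp only [star_trivial]
  nth_rewrite 2 [← cfc_id' ℝ≥0 X]
  rw [← cfc_mul _ _ _ hcont (continuousOn_id' _),
    ← cfc_mul _ _ _ (hcont.fun_mul (continuousOn_id' _)) hcont]
  refine nnnorm_cfc_nnreal_le fun t _ ↦ ?_
  calc (1 + r * t)⁻¹ * t * (1 + r * t)⁻¹ ≤ (1 + r * t)⁻¹ * t * 1 := by
        gcongr; exact inv_le_one_of_one_le₀ le_self_add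
    _ ≤ r⁻¹ := by
        rw [mul_one, inv_mul_le_iff₀ (by positivity), add_mul, one_mul, mul_right_comm,
          mul_inv_cancel₀ hr.ne', one_mul]
        exact le_add_self

lemma tendsto_mul_cfc_of_star_mul_self_le (hX : 0 ≤ X) {w : B} (hw : star w * w ≤ X) :
    Tendsto (fun r : ℝ≥0 ↦ w * cfc (fun t : ℝ≥0 ↦ r * t * (1 + r * t)⁻¹) X) atTop (𝓝 w) := by
  have hbound : ∀ r > 0,
      ‖w * cfc (fun t : ℝ≥0 ↦ r * t * (1 + r * t)⁻¹) X - w‖₊ ≤ NNReal.sqrt r⁻¹ := by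
    intro r hr
    have hE := congrArg (w * ·) (cfc_one_add_mul_inv_add_cfc hX r)
    simp only [mul_add, mul_one, ← eq_sub_iff_add_eq] at hE
    rw [← nnnorm_neg, neg_sub, ← hE, le_sqrt_iff_sq_le]
    exact (nnnorm_mul_sq_le_of_star_mul_self_le hw _).trans
      (nnnorm_star_cfc_one_add_mul_inv_mul_mul_le hX hr)
  have hsqrt : Tendsto (fun r : ℝ≥0 ↦ (NNReal.sqrt r⁻¹ : ℝ)) atTop (𝓝 0) := by
    simpa using NNReal.tendsto_coe.2
      ((NNReal.continuous_sqrt.tendsto 0).comp tendsto_inv_atTop_zero)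
  rw [tendsto_iff_norm_sub_tendsto_zero]
  exact squeeze_zero' (.of_forall fun _ ↦ norm_nonneg _)
    ((eventually_gt_atTop 0).mono fun r hr ↦ NNReal.coe_le_coe.2 (hbound r hr)) hsqrt

lemma cfc_mul_one_add_mul_inv_conj (hX : 0 ≤ X) (r : ℝ≥0) (b : B) :
    cfc (fun t : ℝ≥0 ↦ r * t * (1 + r * t)⁻¹) X * b * cfc (fun t : ℝ≥0 ↦ r * t * (1 + r * t)⁻¹) X
      = X * (cfc (fun t : ℝ≥0 ↦ r * (1 + r * t)⁻¹) X * b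
          * cfc (fun t : ℝ≥0 ↦ r * (1 + r * t)⁻¹) X) * X := by
  have hcont := ((NNReal.continuous_one_add_mul_inv r).continuousOn
    (s := spectrum ℝ≥0 X)).const_mul r
  have hl : cfc (fun t : ℝ≥0 ↦ r * t * (1 + r * t)⁻¹) X
      = X * cfc (fun t : ℝ≥0 ↦ r * (1 + r * t)⁻¹) X := by
    nth_rewrite 2 [← cfc_id' ℝ≥0 X]
    rw [← cfc_mul _ _ _ (continuousOn_id' _) hcont]
    exact cfc_congr fun t _ ↦ by ring
  have hr : cfc (fun t : ℝ≥0 ↦ r * t * (1 + r * t)⁻¹) X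
      = cfc (fun t : ℝ≥0 ↦ r * (1 + r * t)⁻¹) X * X := by
    nth_rewrite 3 [← cfc_id' ℝ≥0 X]
    rw [← cfc_mul _ _ _ hcont (continuousOn_id' _)]
    exact cfc_congr fun t _ ↦ by ring
  nth_rewrite 1 [hl]
  rw [hr]
  simp only [mul_assoc]

end

lemma Unitization.inr_snd_mul_inr_mul {R A : Type*} [CommRing R] [NonUnitalRing A] [Module R A]
    [IsScalarTower R A A] [SMulCommClass R A A] (u v : Unitization R A) (b : A) :
    ((u * b * v).snd : Unitization R A) = u * b * v := by
  ext <;> simp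

theorem star_mul_self_mem_hereditary_general {A : Type*} [NonUnitalCStarAlgebra A]
    (n : ℕ) (a : Fin n → A) :
    star (∑ k, a k) * (∑ k, a k) ∈
      closure {y : A | ∃ d : A,
        y = (∑ k, star (a k) * a k) * d * (∑ k, star (a k) * a k)} := by
  let _ : PartialOrder A⁺¹ := CStarAlgebra.spectralOrder _
  let _ : StarOrderedRing A⁺¹ := CStarAlgebra.spectralOrderedRing _
  set b := ∑ k, a k
  set x := ∑ k, star (a k) * a k
  set Y : ℝ≥0 → A⁺¹ := fun r ↦ cfc (fun t : ℝ≥0 ↦ r * t * (1 + r * t)⁻¹) (x : A⁺¹)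
  have inr_sum (f : Fin n → A) : ((∑ k, f k : A) : A⁺¹) = ∑ k, (f k : A⁺¹) :=
    map_sum (inrNonUnitalStarAlgHom ℂ A) f _
  have hx : (x : A⁺¹) = ∑ k, star (a k : A⁺¹) * a k := by simp [x, inr_sum]
  have hx0 : 0 ≤ (x : A⁺¹) := hx ▸ Finset.sum_nonneg fun k _ ↦ star_mul_self_nonneg _
  have hb : Tendsto (fun r ↦ (b : A⁺¹) * Y r) atTop (𝓝 b) := by
    simp only [b, inr_sum, Finset.sum_mul]
    refine tendsto_finsetSum _ fun k _ ↦ tendsto_mul_cfc_of_star_mul_self_le hx0 ?_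
    rw [hx]
    exact Finset.single_le_sum (f := fun j ↦ star (a j : A⁺¹) * a j)
      (fun j _ ↦ star_mul_self_nonneg _) (Finset.mem_univ k)
  rw [(isometry_inr (𝕜 := ℂ)).isEmbedding.closure_eq_preimage_closure_image]
  refine mem_closure_of_tendsto (f := fun r ↦ star ((b : A⁺¹) * Y r) * (b * Y r))
    (by rw [inr_mul, inr_star]; exact hb.star.mul hb) (.of_forall fun r ↦ ?_)
  set Q := cfc (fun t : ℝ≥0 ↦ r * (1 + r * t)⁻¹) (x : A⁺¹)
  refine ⟨x * (Q * (star b * b : A) * Q).snd * x, ⟨_, rfl⟩, ?_⟩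
  calc ((x * (Q * (star b * b : A) * Q).snd * x : A) : A⁺¹)
      = x * (Q * (star b * b : A) * Q) * x := by rw [inr_mul, inr_mul, inr_snd_mul_inr_mul]
    _ = Y r * (star b * b : A) * Y r := (cfc_mul_one_add_mul_inv_conj hx0 r _).symm
    _ = star (b * Y r) * (b * Y r) := by
      have hY : star (Y r) = Y r := (IsSelfAdjoint.of_nonneg cfc_nonneg_of_predicate).star_eq
      rw [inr_mul, inr_star, star_mul, hY, mul_assoc, mul_assoc, mul_assoc]

/-- Lemma 1.12: with `a = a₁ + ⋯ + aₙ` and `x = a₁* a₁ + ⋯ + aₙ* aₙ`, the element `a* a`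
lies in the hereditary subalgebra generated by `x`, i.e. `a* a ∈ closure (x A x)`. -/
theorem star_mul_self_mem_hereditary {A : Type*} [NonUnitalCStarAlgebra A]
    (n : ℕ) (hn : 0 < n) (a : Fin n → A) :
    star (∑ k, a k) * (∑ k, a k) ∈
      closure {y : A | ∃ d : A,
        y = (∑ k, star (a k) * a k) * d * (∑ k, star (a k) * a k)} :=
  star_mul_self_mem_hereditary_general n a
end

section
/- Let A be a C*-algebra, let a ∈ A₊, and let b be a positive element of the closed two-sided ideal generated by a. Then for every ε > 0 there exist a positive integer n and elements x₁, …, xₙ ∈ A such that ‖b - Σₖ xₖ* a xₖ‖ < ε. -/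
/-!
Approximate `b` by an element `d` of the algebraic ideal generated by `a`. Every generator
`u * a * v` of that ideal satisfies `u a v + (u a v)* ≤ u a u* + v* a v`, so `d + d* ≤ P` for a
finite sum `P` of conjugates of `a`, and hence `2b ≤ P + ε` in the unitization. With
`g = (P + ε) ^ (-1/2)` and `s = √(2b)` one gets `2b - s g P g s = ε (s g)(s g)*`, where
`‖s g‖ ≤ 1` precisely because `2b ≤ P + ε`. Finally `s g P g s` is again a sum of conjugates of
`a`, now by elements of `A` since `A` is an ideal of its unitization.
-/

open scoped CStarAlgebra

def conjugateSums {R : Type*} [NonUnitalSemiring R] [Star R] (a : R) : AddSubmonoid R where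
  carrier := {c | ∃ (n : ℕ) (x : Fin n → R), ∑ k, star (x k) * a * x k = c}
  zero_mem' := ⟨0, Fin.elim0, by simp⟩
  add_mem' := by
    rintro _ _ ⟨m, x, rfl⟩ ⟨n, y, rfl⟩
    exact ⟨m + n, Fin.append x y, by simp [Fin.sum_univ_add]⟩

section Semiring

variable {R : Type*} [NonUnitalSemiring R] [StarMul R] {a c : R}

lemma star_mul_mul_mem_conjugateSums (x : R) : star x * a * x ∈ conjugateSums a :=
  ⟨1, fun _ => x, by simp⟩

lemma star_mul_mul_mem_conjugateSums_of_mem (hc : c ∈ conjugateSums a) (y : R) :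
    star y * c * y ∈ conjugateSums a := by
  obtain ⟨n, x, rfl⟩ := hc
  exact ⟨n, fun k => x k * y, by simp [Finset.mul_sum, Finset.sum_mul, star_mul, mul_assoc]⟩

end Semiring

lemma nonneg_of_mem_conjugateSums {R : Type*} [NonUnitalSemiring R] [StarRing R] [PartialOrder R]
    [StarOrderedRing R] {a c : R} (ha : 0 ≤ a) (hc : c ∈ conjugateSums a) : 0 ≤ c := by
  obtain ⟨n, x, rfl⟩ := hc
  exact Finset.sum_nonneg fun k _ => star_left_conjugate_nonneg ha (x k)

lemma smul_mem_conjugateSums {R : Type*} [NonUnitalSemiring R] [StarRing R] [Module ℝ R]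
    [StarModule ℝ R] [IsScalarTower ℝ R R] [SMulCommClass ℝ R R] {a c : R} {r : ℝ} (hr : 0 ≤ r)
    (hc : c ∈ conjugateSums a) : r • c ∈ conjugateSums a := by
  obtain ⟨n, x, rfl⟩ := hc
  refine ⟨n, fun k => √r • x k, ?_⟩
  simp [Finset.smul_sum, smul_mul_assoc, mul_smul_comm, smul_smul, Real.mul_self_sqrt hr]

lemma mul_mul_add_star_le {R : Type*} [NonUnitalRing R] [StarRing R] [PartialOrder R]
    [StarOrderedRing R] {a : R} (ha : 0 ≤ a) (u v : R) :
    u * a * v + star (u * a * v) ≤ u * a * star u + star v * a * v := by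
  rw [← sub_nonneg]
  convert star_right_conjugate_nonneg ha (u - star v) using 1
  simp only [star_mul, star_sub, star_star, (IsSelfAdjoint.of_nonneg ha).star_eq]
  noncomm_ring

open Pointwise in
lemma exists_mem_conjugateSums_add_star_le {R : Type*} [Ring R] [StarRing R] [PartialOrder R]
    [StarOrderedRing R] {a d : R} (ha : 0 ≤ a) (hd : d ∈ TwoSidedIdeal.span {a}) :
    ∃ P ∈ conjugateSums a, d + star d ≤ P := by
  rw [TwoSidedIdeal.mem_span_iff_mem_addSubgroup_closure] at hd
  have generator (u v : R) : ∃ P ∈ conjugateSums a, u * a * v + star (u * a * v) ≤ P :=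
    ⟨_, add_mem (star_mul_mul_mem_conjugateSums (star u)) (star_mul_mul_mem_conjugateSums v),
      by simpa using mul_mul_add_star_le ha u v⟩
  induction hd using AddSubgroup.closure_induction'' with
  | mem x hx =>
    obtain ⟨_, ⟨u, -, _, rfl, rfl⟩, v, -, rfl⟩ := hx
    exact generator u v
  | neg_mem x hx =>
    obtain ⟨_, ⟨u, -, _, rfl, rfl⟩, v, -, rfl⟩ := hx
    simpa [neg_mul] using generator (-u) v
  | zero => exact ⟨0, zero_mem _, by simp⟩
  | add x y _ _ hx hy =>
    obtain ⟨P, hP, hxP⟩ := hx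
    obtain ⟨Q, hQ, hyQ⟩ := hy
    exact ⟨P + Q, add_mem hP hQ, by simpa [star_add, add_add_add_comm] using add_le_add hxP hyQ⟩

lemma TwoSidedIdeal.apply_mem_span_image {R S F : Type*} [NonUnitalNonAssocRing R]
    [NonUnitalNonAssocRing S] [FunLike F R S] [NonUnitalRingHomClass F R S] (f : F) {s : Set R}
    {x : R} (hx : x ∈ span s) : f x ∈ span (f '' s) := by
  have : span s ≤ (span (f '' s)).comap f :=
    span_le.mpr fun y hy => (mem_comap f).mpr (subset_span (Set.mem_image_of_mem f hy))
  exact (mem_comap f).mp (this hx)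

lemma Unitization.exists_inr_eq_star_inr_mul_mul_inr {R A : Type*} [CommRing R] [StarRing R]
    [NonUnitalRing A] [StarRing A] [Module R A] [StarModule R A] [IsScalarTower R A A]
    [SMulCommClass R A A] {a z : A} {Q : Unitization R A}
    (hQ : Q ∈ conjugateSums (a : Unitization R A)) :
    ∃ c ∈ conjugateSums a, star (z : Unitization R A) * Q * z = c := by
  have mul_inr (x : Unitization R A) :
      x * (z : Unitization R A) = ((x.fst • z + x.snd * z : A)) := by
    ext <;> simp
  obtain ⟨n, x, rfl⟩ := hQ
  refine ⟨_, ⟨n, fun k => (x k).fst • z + (x k).snd * z, rfl⟩, ?_⟩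
  change _ = inrNonUnitalStarAlgHom R A _
  rw [map_sum, Finset.mul_sum, Finset.sum_mul]
  refine Finset.sum_congr rfl fun k _ => ?_
  simp only [map_mul, map_star, inrNonUnitalStarAlgHom_apply, ← mul_inr, star_mul, mul_assoc]

section Unital

variable {B : Type*} [CStarAlgebra B] [PartialOrder B] [StarOrderedRing B]

lemma add_self_le_add_star_add_algebraMap {x y : B} {r : ℝ} (hx : IsSelfAdjoint x)
    (hxy : ‖x - y‖ ≤ r) : x + x ≤ y + star y + algebraMap ℝ B (2 * r) := by
  have hsplit : x + x - (y + star y) = (x - y) + star (x - y) := by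
    rw [star_sub, hx.star_eq]; abel
  rw [← sub_le_iff_le_add', hsplit]
  refine (IsSelfAdjoint.add_star_self _).le_algebraMap_norm_self.trans (algebraMap_mono B ?_)
  calc ‖(x - y) + star (x - y)‖ ≤ ‖x - y‖ + ‖star (x - y)‖ := norm_add_le _ _
    _ ≤ 2 * r := by rw [norm_star]; linarith

lemma exists_norm_sub_mul_star_mul_mul_le {P s : B} {r : ℝ} (hP : 0 ≤ P) (hs : 0 ≤ s)
    (hr : 0 < r) (hle : s * s ≤ P + algebraMap ℝ B r) :
    ∃ g : B, ‖s * s - s * (star g * P * g) * s‖ ≤ r := by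
  set e := P + algebraMap ℝ B r
  have he : IsStrictlyPositive e := .nonneg_add hP (isStrictlyPositive_algebraMap hr)
  set g := e ^ (-(1 / 2) : ℝ)
  have hg : star g = g := (IsSelfAdjoint.of_nonneg CFC.rpow_nonneg).star_eq
  have hsg : ‖s * g‖ ≤ 1 := by
    have h := (le_iff_norm_sqrt_mul_rpow (s * s) e).mp hle
    rwa [CFC.sqrt_mul_self s hs] at h
  have hgeg : g * e * g = 1 := CFC.conjugate_rpow_neg_one_half e
  have hdiff : s * s - s * (star g * P * g) * s = r • ((s * g) * star (s * g)) := by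
    have hP_eq : P = e - algebraMap ℝ B r := by simp [e]
    rw [star_mul, hg, (IsSelfAdjoint.of_nonneg hs).star_eq, hP_eq, mul_sub, sub_mul, hgeg,
      Algebra.algebraMap_eq_smul_one]
    simp only [mul_smul_comm, smul_mul_assoc, mul_one, mul_sub, sub_mul]
    noncomm_ring
  refine ⟨g, ?_⟩
  rw [hdiff, norm_smul, CStarRing.norm_self_mul_star, Real.norm_of_nonneg hr.le]
  exact mul_le_of_le_one_right hr.le (mul_le_one₀ hsg (norm_nonneg _) hsg)

end Unital

lemma exists_mem_conjugateSums_norm_sub_le {A : Type*} [NonUnitalCStarAlgebra A]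
    [PartialOrder A] [StarOrderedRing A] {a c : A} {P : A⁺¹} {r : ℝ} (ha : 0 ≤ a) (hc : 0 ≤ c)
    (hr : 0 < r) (hP : P ∈ conjugateSums (a : A⁺¹)) (hcP : (c : A⁺¹) ≤ P + algebraMap ℝ A⁺¹ r) :
    ∃ c' ∈ conjugateSums a, ‖c - c'‖ ≤ r := by
  obtain ⟨s, hs, hss⟩ : ∃ s : A, 0 ≤ s ∧ s * s = c :=
    ⟨CFC.sqrt c, CFC.sqrt_nonneg c, CFC.sqrt_mul_sqrt_self c hc⟩
  have hs' : 0 ≤ (s : A⁺¹) := Unitization.inr_nonneg_iff.mpr hs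
  obtain ⟨g, hg⟩ := exists_norm_sub_mul_star_mul_mul_le
    (nonneg_of_mem_conjugateSums (Unitization.inr_nonneg_iff.mpr ha) hP) hs' hr
    (by rwa [← Unitization.inr_mul, hss])
  obtain ⟨c', hc', hsc'⟩ := Unitization.exists_inr_eq_star_inr_mul_mul_inr (z := s)
    (star_mul_mul_mem_conjugateSums_of_mem hP g)
  rw [(IsSelfAdjoint.of_nonneg hs').star_eq] at hsc'
  rw [hsc', ← Unitization.inr_mul, hss, ← Unitization.inr_sub, Unitization.norm_inr] at hg
  exact ⟨c', hc', hg⟩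

/-- Lemma 1.13: if `b ≥ 0` lies in the closed two-sided ideal generated by `a ≥ 0`, then
for every `ε > 0` there are `n` and `x₁, …, xₙ ∈ A` with `‖b - Σ xₖ* a xₖ‖ < ε`. -/
theorem approx_by_conjugates_of_mem_closedIdeal {A : Type*} [NonUnitalCStarAlgebra A]
    [PartialOrder A] [StarOrderedRing A]
    (a b : A) (ha : 0 ≤ a) (hb : 0 ≤ b)
    (hmem : b ∈ closure ((TwoSidedIdeal.span {a} : TwoSidedIdeal A) : Set A)) :
    ∀ ε > (0 : ℝ), ∃ (n : ℕ) (x : Fin n → A), ‖b - ∑ k, star (x k) * a * x k‖ < ε := by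
  intro ε hε
  obtain ⟨d, hd, hbd⟩ := Metric.mem_closure_iff.mp hmem (ε / 2) (half_pos hε)
  rw [dist_eq_norm] at hbd
  obtain ⟨P, hP, hdP⟩ := exists_mem_conjugateSums_add_star_le (Unitization.inr_nonneg_iff.mpr ha)
    (by simpa using
      TwoSidedIdeal.apply_mem_span_image (Unitization.inrNonUnitalStarAlgHom ℂ A) hd)
  have hbd' : ‖(b : A⁺¹) - d‖ ≤ ε / 2 := by
    rw [← Unitization.inr_sub, Unitization.norm_inr]; exact hbd.le
  have hbP : ((b + b : A) : A⁺¹) ≤ P + algebraMap ℝ A⁺¹ ε :=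
    calc ((b + b : A) : A⁺¹) ≤ d + star (d : A⁺¹) + algebraMap ℝ A⁺¹ (2 * (ε / 2)) :=
          Unitization.inr_add ℂ b b ▸ add_self_le_add_star_add_algebraMap
            ((Unitization.isSelfAdjoint_inr (R := ℂ)).mpr (.of_nonneg hb)) hbd'
      _ ≤ P + algebraMap ℝ A⁺¹ ε := by rw [mul_div_cancel₀ ε two_ne_zero]; gcongr
  obtain ⟨c, hc, hbc⟩ := exists_mem_conjugateSums_norm_sub_le ha (add_nonneg hb hb) hε hP hbP
  obtain ⟨n, x, hx⟩ := smul_mem_conjugateSums (r := 2⁻¹) (by norm_num) hc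
  refine ⟨n, x, ?_⟩
  have hhalf : b - (2⁻¹ : ℝ) • c = (2⁻¹ : ℝ) • ((b + b) - c) := by
    rw [smul_sub, ← two_smul ℝ b, smul_smul]; norm_num
  rw [hx, hhalf, norm_smul, Real.norm_of_nonneg (by norm_num)]
  linarith
end

section
/- Let A be a C*-algebra, let x ∈ A₊ with ‖x‖ = 1, and let ε > 0. Then there exist positive elements a, b in the hereditary subalgebra closure(x A x) with ‖a‖ = ‖b‖ = 1, a b = b, and such that whenever c ∈ closure(b A b) satisfies ‖c‖ ≤ 1, then ‖x c - c‖ < ε. -/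
/-!
Take `a = f(x)` and `b = g(x)` for piecewise linear ramps `f, g : ℝ → [0, 1]` with `f = 0` near `0`,
`f = 1` on the support of `g`, and both equal to `1` at `1 ∈ σ(x)`; a function vanishing near `0`
factors as `t · h(t) · t`, which puts `f(x)` and `g(x)` in `x A x`. Since `a b = b`, `a` is a left
unit on `closure (b A b)`, so `x c - c = (x a - a) c`, and `‖x a - a‖ = sup |(t - 1) f(t)|` is small
because `f` vanishes away from `1`.
-/

open NonUnitalIsometricContinuousFunctionalCalculus

noncomputable def ramp (c δ t : ℝ) : ℝ := max 0 (min 1 ((t - c) / δ))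

section Ramp

variable {c δ : ℝ}

@[fun_prop]
lemma continuous_ramp (c δ : ℝ) : Continuous (ramp c δ) := by
  unfold ramp; fun_prop

lemma ramp_nonneg (c δ t : ℝ) : 0 ≤ ramp c δ t := le_max_left _ _

lemma ramp_le_one (c δ t : ℝ) : ramp c δ t ≤ 1 :=
  max_le zero_le_one (min_le_left _ _)

lemma abs_ramp_le_one (c δ t : ℝ) : |ramp c δ t| ≤ 1 := by
  rw [abs_of_nonneg (ramp_nonneg c δ t)]; exact ramp_le_one c δ t

lemma ramp_of_le (hδ : 0 < δ) {t : ℝ} (ht : t ≤ c) : ramp c δ t = 0 :=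
  max_eq_left ((min_le_right _ _).trans (div_nonpos_of_nonpos_of_nonneg (by linarith) hδ.le))

lemma ramp_of_ge (hδ : 0 < δ) {t : ℝ} (ht : c + δ ≤ t) : ramp c δ t = 1 := by
  rw [ramp, min_eq_left ((one_le_div hδ).mpr (by linarith)), max_eq_right zero_le_one]

lemma lt_of_ramp_ne_zero (hδ : 0 < δ) {t : ℝ} (ht : ramp c δ t ≠ 0) : c < t :=
  not_le.mp fun h ↦ ht (ramp_of_le hδ h)

lemma ramp_mul_ramp_of_le {c' δ' : ℝ} (hδ : 0 < δ) (hδ' : 0 < δ') (hc : c + δ ≤ c') (t : ℝ) :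
    ramp c δ t * ramp c' δ' t = ramp c' δ' t := by
  by_cases ht : ramp c' δ' t = 0
  · rw [ht, mul_zero]
  · rw [ramp_of_ge hδ (hc.trans (lt_of_ramp_ne_zero hδ' ht).le), one_mul]

lemma abs_sub_one_mul_ramp_le (hδ : 0 < δ) (hc : c ≤ 1) {t : ℝ} (ht : t ≤ 1) :
    |(t - 1) * ramp c δ t| ≤ 1 - c := by
  by_cases hr : ramp c δ t = 0
  · rw [hr, mul_zero, abs_zero]; linarith
  · have hct := lt_of_ramp_ne_zero hδ hr
    rw [abs_mul, abs_of_nonpos (by linarith : t - 1 ≤ 0), abs_of_nonneg (ramp_nonneg c δ t)]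
    nlinarith [ramp_le_one c δ t, ramp_nonneg c δ t]

end Ramp

lemma mul_eq_self_of_mem_closure_mul_mul {S : Type*} [Semigroup S] [TopologicalSpace S]
    [T2Space S] [ContinuousMul S] {a b c : S} (hab : a * b = b)
    (hc : c ∈ closure {y : S | ∃ d, y = b * d * b}) : a * c = c := by
  refine closure_minimal ?_ (isClosed_eq (by fun_prop) continuous_id) hc
  rintro _ ⟨d, rfl⟩
  simp only [Set.mem_ofPred_eq, id, ← mul_assoc, hab]

lemma norm_mul_sub_le_of_mem_closure_mul_mul {R : Type*} [NonUnitalNormedRing R] [T2Space R]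
    {x a b c : R} (hab : a * b = b) (hc : c ∈ closure {y : R | ∃ d, y = b * d * b})
    (hc1 : ‖c‖ ≤ 1) : ‖x * c - c‖ ≤ ‖x * a - a‖ :=
  calc ‖x * c - c‖ = ‖(x * a - a) * c‖ := by
        rw [sub_mul, mul_assoc, mul_eq_self_of_mem_closure_mul_mul hab hc]
    _ ≤ ‖x * a - a‖ := (norm_mul_le _ _).trans (mul_le_of_le_one_right (norm_nonneg _) hc1)

section CStarAlgebra

variable {A : Type*} [NonUnitalCStarAlgebra A] {x : A}

lemma exists_cfcₙ_eq_mul_mul_self (hx : IsSelfAdjoint x) {F : ℝ → ℝ} {c : ℝ}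
    (hc : 0 < c) (hF : Continuous F) (hF0 : ∀ t, |t| ≤ c → F t = 0) : ∃ d, cfcₙ F x = x * d * x := by
  -- `max (t ^ 2) (c ^ 2)` equals `t ^ 2` wherever `F t ≠ 0`, and keeps `h` continuous at `0`.
  set h : ℝ → ℝ := fun t ↦ F t / max (t ^ 2) (c ^ 2)
  have hpos : ∀ t : ℝ, 0 < max (t ^ 2) (c ^ 2) := fun t ↦ lt_max_of_lt_right (by positivity)
  have hh : Continuous h := hF.div (by fun_prop) fun t ↦ (hpos t).ne'
  have hh0 : h 0 = 0 := by simp [h, hF0 0 (by simpa using hc.le)]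
  have hfactor : ∀ t, t * h t * t = F t := by
    intro t
    by_cases ht : |t| ≤ c
    · simp [h, hF0 t ht]
    · have hsq : c ^ 2 ≤ t ^ 2 := by nlinarith [sq_abs t, abs_nonneg t]
      have ht0 : t ≠ 0 := by rintro rfl; simp at ht; linarith
      simp only [h, max_eq_left hsq]
      field_simp
  refine ⟨cfcₙ h x, ?_⟩
  calc cfcₙ F x = cfcₙ (fun t ↦ t * h t * t) x := cfcₙ_congr fun t _ ↦ (hfactor t).symm
    _ = x * cfcₙ h x * x := by
      rw [cfcₙ_mul (fun t ↦ t * h t) (fun t ↦ t) x (hf0 := by simp [hh0]),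
        cfcₙ_mul (fun t ↦ t) h x, cfcₙ_id' ℝ x]

lemma mul_cfcₙ_sub_cfcₙ (hx : IsSelfAdjoint x) {f : ℝ → ℝ} (hf : Continuous f)
    (hf0 : f 0 = 0) : x * cfcₙ f x - cfcₙ f x = cfcₙ (fun t ↦ (t - 1) * f t) x := by
  calc x * cfcₙ f x - cfcₙ f x = cfcₙ (fun t ↦ t * f t - f t) x := by
        rw [cfcₙ_sub (fun t ↦ t * f t) f x (hf0 := by simp [hf0]), cfcₙ_mul (fun t ↦ t) f x,
          cfcₙ_id' ℝ x]
    _ = cfcₙ (fun t ↦ (t - 1) * f t) x := cfcₙ_congr fun t _ ↦ by ring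

variable {c δ : ℝ}

lemma cfcₙ_ramp_mem_closure_mul_mul (hx : IsSelfAdjoint x) (hδ : 0 < δ) (hc : 0 < c) :
    cfcₙ (ramp c δ) x ∈ closure {y : A | ∃ d, y = x * d * x} :=
  subset_closure <| exists_cfcₙ_eq_mul_mul_self hx hc (continuous_ramp c δ)
    fun t ht ↦ ramp_of_le hδ ((le_abs_self t).trans ht)

lemma norm_cfcₙ_ramp (hx : IsSelfAdjoint x) (h1 : (1 : ℝ) ∈ quasispectrum ℝ x) (hδ : 0 < δ)
    (hc0 : 0 ≤ c) (hc1 : c + δ ≤ 1) : ‖cfcₙ (ramp c δ) x‖ = 1 := by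
  have h0 : ramp c δ 0 = 0 := ramp_of_le hδ hc0
  refine le_antisymm (norm_cfcₙ_le fun t _ ↦ abs_ramp_le_one c δ t) ?_
  simpa [ramp_of_ge hδ hc1] using norm_apply_le_norm_cfcₙ (ramp c δ) x h1

lemma cfcₙ_ramp_mul_cfcₙ_ramp {c' δ' : ℝ} (hδ : 0 < δ) (hδ' : 0 < δ') (hc0 : 0 ≤ c)
    (hc : c + δ ≤ c') : cfcₙ (ramp c δ) x * cfcₙ (ramp c' δ') x = cfcₙ (ramp c' δ') x := by
  rw [← cfcₙ_mul _ _ x (hf0 := ramp_of_le hδ hc0) (hg0 := ramp_of_le hδ' (by linarith))]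
  exact cfcₙ_congr fun t _ ↦ ramp_mul_ramp_of_le hδ hδ' hc t

lemma norm_mul_cfcₙ_ramp_sub_le (hx : IsSelfAdjoint x) (hx1 : ‖x‖ ≤ 1) (hδ : 0 < δ)
    (hc0 : 0 ≤ c) (hc1 : c ≤ 1) : ‖x * cfcₙ (ramp c δ) x - cfcₙ (ramp c δ) x‖ ≤ 1 - c := by
  rw [mul_cfcₙ_sub_cfcₙ hx (continuous_ramp c δ) (ramp_of_le hδ hc0)]
  refine norm_cfcₙ_le fun t ht ↦ abs_sub_one_mul_ramp_le hδ hc1 ?_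
  exact (le_abs_self t).trans ((norm_quasispectrum_le x ht).trans hx1)

variable [PartialOrder A] [StarOrderedRing A]

lemma norm_mem_quasispectrum_of_nonneg (hx : 0 ≤ x) : ‖x‖ ∈ quasispectrum ℝ x := by
  obtain ⟨t, ht, htx : ‖t‖ = ‖x‖⟩ := (isGreatest_norm_quasispectrum (𝕜 := ℝ) x).1
  rwa [← htx, Real.norm_of_nonneg (quasispectrum_nonneg_of_nonneg x hx t ht)]

end CStarAlgebra

/-- Lemma 2.8: given `x ≥ 0` with `‖x‖ = 1` and `ε > 0`, there are positive `a, b` in the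
hereditary subalgebra `closure (x A x)` with `‖a‖ = ‖b‖ = 1`, `a b = b`, and such that
every `c ∈ closure (b A b)` with `‖c‖ ≤ 1` satisfies `‖x c - c‖ < ε`. -/
theorem exists_pair_in_hereditary {A : Type*} [NonUnitalCStarAlgebra A]
    [PartialOrder A] [StarOrderedRing A]
    (x : A) (hx : 0 ≤ x) (hxn : ‖x‖ = 1) (ε : ℝ) (hε : 0 < ε) :
    ∃ a b : A, 0 ≤ a ∧ 0 ≤ b ∧
      a ∈ closure {y : A | ∃ d, y = x * d * x} ∧
      b ∈ closure {y : A | ∃ d, y = x * d * x} ∧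
      ‖a‖ = 1 ∧ ‖b‖ = 1 ∧ a * b = b ∧
      ∀ c ∈ closure {y : A | ∃ d, y = b * d * b}, ‖c‖ ≤ 1 → ‖x * c - c‖ < ε := by
  have hsa : IsSelfAdjoint x := .of_nonneg hx
  have h1 : (1 : ℝ) ∈ quasispectrum ℝ x := hxn ▸ norm_mem_quasispectrum_of_nonneg hx
  set δ := min (ε / 3) (1 / 3)
  have hδ : 0 < δ := lt_min (by linarith) (by norm_num)
  have hδ3 : δ ≤ 1 / 3 := min_le_right _ _
  have hδε : δ ≤ ε / 3 := min_le_left _ _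
  set a := cfcₙ (ramp (1 - 2 * δ) δ) x
  set b := cfcₙ (ramp (1 - δ) δ) x
  have hab : a * b = b := cfcₙ_ramp_mul_cfcₙ_ramp hδ hδ (by linarith) (by linarith)
  have hxa : ‖x * a - a‖ ≤ 2 * δ := by
    simpa using norm_mul_cfcₙ_ramp_sub_le hsa hxn.le hδ (c := 1 - 2 * δ) (by linarith) (by linarith)
  refine ⟨a, b, cfcₙ_nonneg fun t _ ↦ ramp_nonneg _ _ t, cfcₙ_nonneg fun t _ ↦ ramp_nonneg _ _ t,
    cfcₙ_ramp_mem_closure_mul_mul hsa hδ (by linarith),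
    cfcₙ_ramp_mem_closure_mul_mul hsa hδ (by linarith),
    norm_cfcₙ_ramp hsa h1 hδ (by linarith) (by linarith),
    norm_cfcₙ_ramp hsa h1 hδ (by linarith) (by linarith), hab, fun c hc hc1 ↦ ?_⟩
  linarith [norm_mul_sub_le_of_mem_closure_mul_mul (x := x) hab hc hc1]
end

section
/- Let X be a compact Hausdorff space, let G be a discrete group acting on X such that for every finite set S ⊂ G the set {x ∈ X : g·x ≠ x for all g ∈ S \ {1}} is dense in X. Let a = Σ_{g∈T} b_g u_g be an element of the algebraic crossed product C(X)[G] inside the reduced crossed product, and let ε > 0. Then there exists f ∈ C(X) with 0 ≤ f ≤ 1 such that f a* a f ∈ C(X) and ‖f a* a f‖ ≥ ‖E(a* a)‖ - ε, where E is the canonical conditional expectation onto C(X). -/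
/-!
Every `x ∈ C(X)[G]` is a finite sum `∑ ι(c_h) u_h`, and cutting it down by `f ∈ C(X)` gives
`f x f = ∑ ι(f c_h α_h(f)) u_h`. If `f` is supported so close to a point `x₀` that its
support is disjoint from its translates by the finitely many nontrivial `h` occurring in `x`,
only the term `h = 1` survives and `f x f = f E(x) f ∈ C(X)`. For `x = a* a` pick `x₀` free for
the relevant group elements (possible by density) where `|E(a* a)|` is within `ε` of its
maximum, and a Urysohn function `f` with `f x₀ = 1`; then `‖f E(a* a) f‖ ≥ |E(a* a)(x₀)|`.
-/

open scoped ComplexOrder Pointwise Topology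

section Translate

variable {G X : Type*} [Group G] [TopologicalSpace X] [MulAction G X] [ContinuousConstSMul G X]

namespace ContinuousMap

variable {R : Type*} [TopologicalSpace R]

def translate (g : G) (f : C(X, R)) : C(X, R) :=
  f.comp ((Homeomorph.smul g⁻¹ : X ≃ₜ X) : C(X, X))

@[simp]
theorem translate_apply (g : G) (f : C(X, R)) (x : X) : f.translate g x = f (g⁻¹ • x) :=
  rfl

@[simp]
theorem translate_one (f : C(X, R)) : f.translate (1 : G) = f := by
  ext x
  simp

end ContinuousMap

theorem exists_mem_nhds_disjoint_smul [T2Space X] (K : Finset G) {x : X}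
    (hx : ∀ g ∈ K, g • x ≠ x) : ∃ U ∈ 𝓝 x, ∀ g ∈ K, Disjoint U (g • U) := by
  have separate : ∀ g ∈ K, ∃ U ∈ 𝓝 x, Disjoint U (g • U) := by
    intro g hg
    obtain ⟨v, w, hv, hw, hvw⟩ := t2_separation_nhds (hx g hg).symm
    refine ⟨v ∩ (g • ·) ⁻¹' w,
      Filter.inter_mem hv ((continuous_const_smul g).continuousAt.preimage_mem_nhds hw), ?_⟩
    exact hvw.mono Set.inter_subset_left (Set.smul_set_subset_iff.2 fun y hy => hy.2)
  choose! U hU hdisj using separate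
  refine ⟨⋂ g ∈ K, U g, (Filter.biInter_finset_mem K).2 hU, fun g hg => ?_⟩
  have hsub : ⋂ g ∈ K, U g ⊆ U g := Set.biInter_subset_of_mem hg
  exact (hdisj g hg).mono hsub (Set.smul_set_mono hsub)

theorem exists_bump_mul_translate_eq_zero [CompactSpace X] [T2Space X] (K : Finset G) {x₀ : X}
    (hx₀ : ∀ g ∈ K, g • x₀ ≠ x₀) :
    ∃ f : C(X, ℂ), 0 ≤ f ∧ f ≤ 1 ∧ f x₀ = 1 ∧
      ∀ g ∈ K, f * f.translate g = 0 := by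
  obtain ⟨U, hU, hdisj⟩ := exists_mem_nhds_disjoint_smul K hx₀
  obtain ⟨φ, hφU, hφx₀, hφ01⟩ := exists_continuous_zero_one_of_isClosed
    isOpen_interior.isClosed_compl isClosed_singleton
    (Set.disjoint_singleton_right.2 (not_not.2 (mem_interior_iff_mem_nhds.2 hU)))
  have hφ : ∀ x ∉ U, φ x = 0 := fun x hx => hφU fun hx' => hx (interior_subset hx')
  refine ⟨(Complex.ofRealCLM : C(ℝ, ℂ)).comp φ, ContinuousMap.le_def.2 fun x => ?_,
    ContinuousMap.le_def.2 fun x => ?_, ?_, fun g hg => ?_⟩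
  · simpa using (hφ01 x).1
  · simpa using Complex.real_le_real.2 (hφ01 x).2
  · simpa using hφx₀ rfl
  · ext x
    by_cases hx : x ∈ U
    · have hgx : g⁻¹ • x ∉ U := fun h =>
        Set.disjoint_left.1 (hdisj g hg) hx (by simpa using Set.smul_mem_smul_set (a := g) h)
      simp [hφ _ hgx]
    · simp [hφ x hx]

end Translate

section CrossedProduct

variable {G X T : Type*} [Group G] [TopologicalSpace X] [MulAction G X] [ContinuousConstSMul G X]
  [Semiring T] [StarRing T] [Algebra ℂ T]

def IsCovariant (ι : C(X, ℂ) →⋆ₐ[ℂ] T) (u : G →* unitary T) : Prop :=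
  ∀ (g : G) (f : C(X, ℂ)), (u g : T) * ι f * star (u g : T) = ι (f.translate g)

namespace IsCovariant

variable {ι : C(X, ℂ) →⋆ₐ[ℂ] T} {u : G →* unitary T}

theorem unitary_mul_eq (hcov : IsCovariant ι u) (g : G) (f : C(X, ℂ)) :
    (u g : T) * ι f = ι (f.translate g) * u g := by
  rw [← hcov, mul_assoc _ (star _), Unitary.coe_star_mul_self, mul_one]

theorem mul_mul_eq (hcov : IsCovariant ι u) (f c f' : C(X, ℂ)) (h : G) :
    ι f * (ι c * u h) * ι f' = ι (f * c * f'.translate h) * u h := by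
  rw [mul_assoc, mul_assoc, hcov.unitary_mul_eq, map_mul, map_mul]
  simp only [mul_assoc]

theorem star_mul_mul (hcov : IsCovariant ι u) (b b' : C(X, ℂ)) (g g' : G) :
    star (ι b * u g) * (ι b' * u g') = ι ((star b * b').translate g⁻¹) * u (g⁻¹ * g') := by
  have hstar : star (u g : T) = u g⁻¹ := by
    rw [← Unitary.coe_star, Unitary.star_eq_inv, map_inv]
  rw [star_mul, hstar, ← map_star, mul_assoc, ← mul_assoc (ι (star b)), ← map_mul,
    ← mul_assoc, hcov.unitary_mul_eq, mul_assoc, map_mul u, Submonoid.coe_mul]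

theorem star_sum_mul_sum (hcov : IsCovariant ι u) (S : Finset G) (b : G → C(X, ℂ)) :
    star (∑ g ∈ S, ι (b g) * u g) * ∑ g ∈ S, ι (b g) * u g =
      ∑ p ∈ S ×ˢ S, ι ((star (b p.1) * b p.2).translate p.1⁻¹) * u (p.1⁻¹ * p.2) := by
  rw [star_sum, Finset.sum_mul_sum, Finset.sum_product]
  simp only [hcov.star_mul_mul]

theorem mul_sum_mul_eq_expectation [DecidableEq G] (hcov : IsCovariant ι u)
    {E : T →ₗ[ℂ] C(X, ℂ)}
    (hE : ∀ (f : C(X, ℂ)) (g : G), E (ι f * u g) = if g = 1 then f else 0)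
    {I : Type*} (s : Finset I) (c : I → C(X, ℂ)) (h : I → G) (f : C(X, ℂ))
    (hf : ∀ i ∈ s, h i ≠ 1 → f * f.translate (h i) = 0) :
    ι f * (∑ i ∈ s, ι (c i) * u (h i)) * ι f =
      ι (f * E (∑ i ∈ s, ι (c i) * u (h i)) * f) := by
  simp only [map_sum, hE, Finset.mul_sum, Finset.sum_mul, hcov.mul_mul_eq]
  refine Finset.sum_congr rfl fun i hi => ?_
  split_ifs with h1
  · simp [h1]
  · rw [mul_zero, zero_mul, map_zero, mul_right_comm, hf i hi h1, zero_mul, map_zero, zero_mul]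

end IsCovariant

end CrossedProduct

theorem Dense.exists_norm_sub_lt_norm_apply {X E : Type*} [TopologicalSpace X] [CompactSpace X]
    [NormedAddCommGroup E] {s : Set X} (hs : Dense s) (c : C(X, E)) {ε : ℝ} (hε : 0 < ε)
    (hc : ε ≤ ‖c‖) : ∃ x ∈ s, ‖c‖ - ε < ‖c x‖ := by
  refine hs.exists_mem_open (isOpen_lt continuous_const c.continuous.norm) ?_
  by_contra hempty
  have hle : ‖c‖ ≤ ‖c‖ - ε :=
    (c.norm_le (sub_nonneg.2 hc)).2 fun x => not_lt.1 fun hx => hempty ⟨x, hx⟩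
  linarith

/-- Lemma 6.7: Let a discrete group `G` act on a compact Hausdorff space `X` by
homeomorphisms such that for every finite `S ⊆ G` the set of points not fixed by any
nontrivial element of `S` is dense.  Model the reduced crossed product by a unital
C*-algebra `T` with an injective unital embedding `ι : C(X) → T`, covariant unitaries
`u g`, and the canonical conditional expectation `E`.  Then for every
`a = Σ_{g ∈ S} ι(b g) u g` in the algebraic crossed product and every `ε > 0` there is
`f ∈ C(X)` with `0 ≤ f ≤ 1`, `f a* a f ∈ C(X)`, and `‖f a* a f‖ ≥ ‖E(a* a)‖ - ε`. -/
theorem exists_cutdown_in_CX {G X T : Type*} [Group G] [DecidableEq G]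
    [TopologicalSpace X] [CompactSpace X] [T2Space X]
    [MulAction G X] [ContinuousConstSMul G X] [CStarAlgebra T]
    (hfree : ∀ S : Finset G, Dense {x : X | ∀ g ∈ S, g ≠ 1 → g • x ≠ x})
    (ι : C(X, ℂ) →⋆ₐ[ℂ] T) (hι : Function.Injective ι)
    (u : G →* unitary T)
    (hcov : ∀ (g : G) (f : C(X, ℂ)),
      (u g : T) * ι f * star (u g : T) = ι (f.comp ((Homeomorph.smul g⁻¹ : X ≃ₜ X) : C(X, X))))
    (E : T →ₗ[ℂ] C(X, ℂ))
    (hE : ∀ (f : C(X, ℂ)) (g : G), E (ι f * (u g : T)) = if g = 1 then f else 0)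
    (S : Finset G) (b : G → C(X, ℂ)) (a : T) (ha : a = ∑ g ∈ S, ι (b g) * (u g : T))
    (ε : ℝ) (hε : 0 < ε) :
    ∃ f : C(X, ℂ), 0 ≤ f ∧ f ≤ 1 ∧
      (∃ f₀ : C(X, ℂ), ι f * (star a * a) * ι f = ι f₀) ∧
      ‖E (star a * a)‖ - ε ≤ ‖ι f * (star a * a) * ι f‖ := by
  have hcov : IsCovariant ι u := hcov
  set c := E (star a * a)
  by_cases hsmall : ‖c‖ ≤ ε
  · refine ⟨0, le_rfl, zero_le_one, ⟨0, by simp⟩, ?_⟩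
    linarith [norm_nonneg (ι 0 * (star a * a) * ι 0)]
  obtain ⟨x₀, hx₀free, hx₀c⟩ :=
    (hfree (S⁻¹ * S)).exists_norm_sub_lt_norm_apply c hε (not_le.1 hsmall).le
  obtain ⟨f, hf0, hf1, hfx₀, horth⟩ :=
    exists_bump_mul_translate_eq_zero ((S⁻¹ * S).erase 1) fun g hg =>
      hx₀free g (Finset.mem_of_mem_erase hg) (Finset.ne_of_mem_erase hg)
  have hcut : ι f * (star a * a) * ι f = ι (f * c * f) := by
    simp only [c, ha, hcov.star_sum_mul_sum]
    refine hcov.mul_sum_mul_eq_expectation hE _ _ _ f fun p hp hne => horth _ ?_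
    obtain ⟨hp₁, hp₂⟩ := Finset.mem_product.1 hp
    exact Finset.mem_erase.2 ⟨hne, Finset.mul_mem_mul (Finset.inv_mem_inv hp₁) hp₂⟩
  refine ⟨f, hf0, hf1, ⟨_, hcut⟩, ?_⟩
  rw [hcut, NonUnitalStarAlgHom.norm_map ι hι]
  calc ‖c‖ - ε ≤ ‖c x₀‖ := hx₀c.le
    _ = ‖(f * c * f) x₀‖ := by simp [hfx₀]
    _ ≤ ‖f * c * f‖ := (f * c * f).norm_coe_le_norm x₀
end

section
/- Let X be a compact Hausdorff space, let h: X → X be a minimal homeomorphism, and let K ⊂ X be a compact set with hⁿ(K) ∩ K = ∅ for all nonzero integers n. Let U ⊂ X be a nonempty open set. Then there exist l ≥ 0, compact sets K₁, …, K_l ⊂ X, and positive integers n₁, …, n_l, such that K ⊂ K₁ ∪ ⋯ ∪ K_l and the sets h^{n₁}(K₁), …, h^{n_l}(K_l) are pairwise disjoint subsets of U. -/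
/-- A homeomorphism of a compact Hausdorff space is minimal if its only closed invariant
sets are `∅` and the whole space. -/
def IsMinimalHomeo {X : Type*} [TopologicalSpace X] (h : X ≃ₜ X) : Prop :=
  ∀ Y : Set X, IsClosed Y → (⇑h) '' Y = Y → Y = ∅ ∨ Y = Set.univ

/-! Every orbit of a minimal homeomorphism meets the open set `U`: the points whose orbit misses
`U` form a closed invariant proper subset. By compactness the return times are bounded, and
shifting by the bound makes them positive, so `X` is covered by `h^{-n}(U)`, `1 ≤ n ≤ N`. Shrinking
this cover of `K` to compact sets `Kₙ ⊆ K` gives images `hⁿ(Kₙ) ⊆ U`, pairwise disjoint because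
the translates `hⁿ(K)` are. -/

open Set

namespace Homeomorph

variable {X : Type*} [TopologicalSpace X] (h : X ≃ₜ X)

theorem coe_toEquiv_zpow (n : ℤ) : ⇑(h.toEquiv ^ n) = ⇑(h ^ n) := by
  let toPerm : (X ≃ₜ X) →* Equiv.Perm X :=
    { toFun := Homeomorph.toEquiv, map_one' := rfl, map_mul' := fun _ _ => rfl }
  exact congrArg DFunLike.coe (map_zpow toPerm h n).symm

theorem zpow_apply_zpow_apply (m n : ℤ) (x : X) : (h ^ m) ((h ^ n) x) = (h ^ (m + n)) x := by
  rw [zpow_add, mul_apply]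

theorem disjoint_image_zpow {K : Set X} (hK : ∀ n : ℤ, n ≠ 0 → ⇑(h ^ n) '' K ∩ K = ∅)
    {m n : ℤ} (hmn : m ≠ n) : Disjoint (⇑(h ^ m) '' K) (⇑(h ^ n) '' K) := by
  have hm : ⇑(h ^ m) '' K = ⇑(h ^ n) '' (⇑(h ^ (m - n)) '' K) := by
    rw [image_image]
    simp only [zpow_apply_zpow_apply, add_sub_cancel]
  rw [hm, disjoint_image_iff (h ^ n).injective, disjoint_iff_inter_eq_empty]
  exact hK _ (sub_ne_zero.mpr hmn)

end Homeomorph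

namespace IsMinimalHomeo

variable {X : Type*} [TopologicalSpace X] {h : X ≃ₜ X} {U : Set X}

theorem exists_zpow_apply_mem (hmin : IsMinimalHomeo h) (hU : IsOpen U) (hUne : U.Nonempty)
    (x : X) : ∃ n : ℤ, (h ^ n) x ∈ U := by
  set Y : Set X := ⋂ n : ℤ, ⇑(h ^ n) ⁻¹' Uᶜ
  have hYclosed : IsClosed Y :=
    isClosed_iInter fun n => hU.isClosed_compl.preimage (h ^ n).continuous
  have hYinv : ⇑h '' Y = Y := by
    ext y
    rw [h.image_eq_preimage_symm]
    have hshift : ∀ n : ℤ, (h ^ n) (h.symm y) = (h ^ (n - 1)) y := fun n => by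
      rw [sub_eq_add_neg, ← Homeomorph.zpow_apply_zpow_apply, zpow_neg_one, Homeomorph.inv_apply]
    simp only [Y, mem_preimage, mem_iInter, mem_compl_iff, hshift]
    exact ⟨fun hy n => by simpa using hy (n + 1), fun hy n => hy (n - 1)⟩
  have hYne : Y ≠ univ := fun hY =>
    mem_iInter.mp (hY.symm ▸ mem_univ hUne.some : hUne.some ∈ Y) 0 hUne.some_mem
  have hYempty : Y = ∅ := (hmin Y hYclosed hYinv).resolve_right hYne
  by_contra! hx
  exact notMem_empty x (hYempty ▸ mem_iInter.mpr hx)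

theorem exists_natAbs_le_zpow_apply_mem [CompactSpace X] (hmin : IsMinimalHomeo h)
    (hU : IsOpen U) (hUne : U.Nonempty) :
    ∃ M : ℕ, ∀ x, ∃ n : ℤ, n.natAbs ≤ M ∧ (h ^ n) x ∈ U := by
  obtain ⟨T, hT⟩ := isCompact_univ.elim_finite_subcover (fun n : ℤ => ⇑(h ^ n) ⁻¹' U)
    (fun n => hU.preimage (h ^ n).continuous)
    fun x _ => mem_iUnion.mpr (hmin.exists_zpow_apply_mem hU hUne x)
  refine ⟨T.sup Int.natAbs, fun x => ?_⟩
  obtain ⟨n, hnT, hn⟩ := mem_iUnion₂.mp (hT (mem_univ x))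
  exact ⟨n, Finset.le_sup hnT, hn⟩

theorem exists_iUnion_preimage_zpow_succ_eq_univ [CompactSpace X] (hmin : IsMinimalHomeo h)
    (hU : IsOpen U) (hUne : U.Nonempty) :
    ∃ N : ℕ, ⋃ i : Fin N, ⇑(h ^ ((i + 1 : ℕ) : ℤ)) ⁻¹' U = univ := by
  obtain ⟨M, hM⟩ := hmin.exists_natAbs_le_zpow_apply_mem hU hUne
  refine ⟨2 * M + 1, eq_univ_of_forall fun x => ?_⟩
  obtain ⟨n, hnM, hn⟩ := hM ((h ^ ((M : ℤ) + 1)) x)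
  rw [Homeomorph.zpow_apply_zpow_apply] at hn
  refine mem_iUnion.mpr ⟨⟨(n + M).toNat, by omega⟩, ?_⟩
  have hexp : (((n + M).toNat + 1 : ℕ) : ℤ) = n + (M + 1) := by omega
  rwa [mem_preimage, hexp]

end IsMinimalHomeo

/-- Lemma 7.5: let `h` be a minimal homeomorphism of a compact Hausdorff space `X`, let
`K` be compact with `hⁿ(K) ∩ K = ∅` for all `n ≠ 0`, and let `U` be nonempty open.  Then
`K` is covered by compact sets `K₁, …, K_l` and there are positive integers `n₁, …, n_l`
such that the sets `h^{nⱼ}(Kⱼ)` are pairwise disjoint subsets of `U`. -/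
theorem exists_compact_cover_into_open {X : Type*} [TopologicalSpace X] [CompactSpace X]
    [T2Space X] (h : X ≃ₜ X) (hmin : IsMinimalHomeo h)
    (K : Set X) (hK : IsCompact K)
    (hKdisj : ∀ n : ℤ, n ≠ 0 → (⇑(h.toEquiv ^ n)) '' K ∩ K = ∅)
    (U : Set X) (hU : IsOpen U) (hUne : U.Nonempty) :
    ∃ (l : ℕ) (Ks : Fin l → Set X) (ns : Fin l → ℕ),
      (∀ i, IsCompact (Ks i)) ∧ (∀ i, 0 < ns i) ∧
      K ⊆ ⋃ i, Ks i ∧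
      (∀ i, (⇑(h.toEquiv ^ (ns i : ℤ))) '' Ks i ⊆ U) ∧
      (∀ i j, i ≠ j → Disjoint ((⇑(h.toEquiv ^ (ns i : ℤ))) '' Ks i) ((⇑(h.toEquiv ^ (ns j : ℤ))) '' Ks j)) := by
  simp only [Homeomorph.coe_toEquiv_zpow] at hKdisj ⊢
  obtain ⟨N, hN⟩ := hmin.exists_iUnion_preimage_zpow_succ_eq_univ hU hUne
  obtain ⟨C, hC, hCU, hKC⟩ := hK.finite_compact_cover Finset.univ
    (fun i : Fin N => ⇑(h ^ ((i + 1 : ℕ) : ℤ)) ⁻¹' U) (fun _ _ => hU.preimage (h ^ _).continuous)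
    (by simp only [Finset.mem_univ, iUnion_true, hN]; exact subset_univ K)
  have hCK : ∀ i, C i ⊆ K := fun i => hKC ▸ subset_biUnion_of_mem (Finset.mem_univ i)
  refine ⟨N, C, fun i => i + 1, hC, fun _ => Nat.succ_pos _, by simpa using hKC.subset,
    fun i => image_subset_iff.mpr (hCU i), fun i j hij => ?_⟩
  have hij' : (((i : ℕ) + 1 : ℕ) : ℤ) ≠ (((j : ℕ) + 1 : ℕ) : ℤ) := by
    have := Fin.val_injective.ne hij
    omega
  exact (h.disjoint_image_zpow hKdisj hij').mono (image_mono (hCK i)) (image_mono (hCK j))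
end
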